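/- arXiv:2508.08008 — 2 statements merged into one kernel-verified Lean document; each statement's English description precedes it below -/
import Mathlib

section
/- Measure of a parabolic boundary strip in a Lipschitz graph domain (Lemma 4.2): For every n ≥ 1 and K₀ > 0 there is C > 0 depending only on n and K₀ such that the following holds. Let φ : ℝ^{n−1}×ℝ → ℝ satisfy |φ(x',t) − φ(y',s)| ≤ K₀·(|x'−y'|²+|t−s|)^{1/2} for all (x',t),(y',s), and set Ω := {(x',x_n,t) : x_n > φ(x',t)} and Γ := {(x',x_n,t) : x_n = φ(x',t)}. Then for every (x₀,t₀) in the closure of Ω and all r > 0, d > 0, the Lebesgue measure of the set {(x,t) ∈ Ω ∩ Q_r(x₀,t₀) : d_p((x,t), Γ) ≤ d} is at most C·r^{n+1}·d. -/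
open MeasureTheory Set
open scoped ENNReal

noncomputable section

/-- Points of the parabolic space `ℝⁿ × ℝ`. -/
abbrev Pt (n : ℕ) := EuclideanSpace ℝ (Fin n) × ℝ

/-- The parabolic norm `|(x,t)| = √(|x|² + |t|)` (its value for `t ≤ 0`; all uses below
are at points whose time component is nonpositive). -/
def pnorm {n : ℕ} (z : Pt n) : ℝ := Real.sqrt (‖z.1‖ ^ 2 + |z.2|)

/-- The parabolic distance `d_p((x,t),(y,s)) = √(|x-y|² + |t-s|)`. -/
def pdist {n : ℕ} (z w : Pt n) : ℝ := Real.sqrt (‖z.1 - w.1‖ ^ 2 + |z.2 - w.2|)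

/-- The parabolic cylinder `Q_r(z₀) = B_r(x₀) × (t₀ - r², t₀]`. -/
def pCyl {n : ℕ} (z₀ : Pt n) (r : ℝ) : Set (Pt n) :=
  {z | ‖z.1 - z₀.1‖ < r ∧ z₀.2 - r ^ 2 < z.2 ∧ z.2 ≤ z₀.2}

/-- Pucci's maximal operator `𝓜⁺(M) = Λ·Σ_{λᵢ>0} λᵢ + λ·Σ_{λᵢ<0} λᵢ`. -/
def pucciPlus {n : ℕ} (lam Lam : ℝ) (M : Matrix (Fin n) (Fin n) ℝ) : ℝ :=
  if hM : M.IsHermitian then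
    ∑ i, (if 0 < hM.eigenvalues i then Lam else lam) * hM.eigenvalues i
  else 0

/-- Pucci's minimal operator `𝓜⁻(M) = λ·Σ_{λᵢ>0} λᵢ + Λ·Σ_{λᵢ<0} λᵢ`. -/
def pucciMinus {n : ℕ} (lam Lam : ℝ) (M : Matrix (Fin n) (Fin n) ℝ) : ℝ :=
  if hM : M.IsHermitian then
    ∑ i, (if 0 < hM.eigenvalues i then lam else Lam) * hM.eigenvalues i
  else 0

/-- Euclidean dot product. -/
def dotp {n : ℕ} (x y : EuclideanSpace ℝ (Fin n)) : ℝ := ∑ i, x i * y i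

/-- `H` is the (entrywise, via iterated directional derivatives) spatial Hessian of `u`
at the point `z`. -/
def IsSpatialHessianAt {n : ℕ} (u : Pt n → ℝ) (H : Matrix (Fin n) (Fin n) ℝ) (z : Pt n) :
    Prop :=
  ∀ i j, HasLineDerivAt ℝ
    (fun x => lineDeriv ℝ (fun y => u (y, z.2)) x (EuclideanSpace.single j 1))
    (H i j) z.1 (EuclideanSpace.single i 1)

/-- `a` is the time derivative of `u` at `z`. -/
def IsTimeDerivAt {n : ℕ} (u : Pt n → ℝ) (a : ℝ) (z : Pt n) : Prop :=
  HasDerivAt (fun s => u (z.1, s)) a z.2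

/-- Classical membership in the Pucci class `S*(λ,Λ,f)` on `D`, with spatial Hessian `Hu`
and time derivative `ut`: `∂ₜu - 𝓜⁺(D²u) ≤ |f|` and `∂ₜu - 𝓜⁻(D²u) ≥ -|f|`. -/
def InPucciStar {n : ℕ} (lam Lam : ℝ) (f u : Pt n → ℝ)
    (Hu : Pt n → Matrix (Fin n) (Fin n) ℝ) (ut : Pt n → ℝ) (D : Set (Pt n)) : Prop :=
  ContinuousOn u D ∧
    ∀ z ∈ D, IsSpatialHessianAt u (Hu z) z ∧ IsTimeDerivAt u (ut z) z ∧
      ut z - pucciPlus lam Lam (Hu z) ≤ |f z| ∧ -|f z| ≤ ut z - pucciMinus lam Lam (Hu z)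

/-- Classical membership in the Pucci class `S(λ,Λ,0)` on `D`:
`𝓜⁻(D²u) ≤ ∂ₜu ≤ 𝓜⁺(D²u)`. -/
def InPucciZero {n : ℕ} (lam Lam : ℝ) (u : Pt n → ℝ)
    (Hu : Pt n → Matrix (Fin n) (Fin n) ℝ) (ut : Pt n → ℝ) (D : Set (Pt n)) : Prop :=
  ContinuousOn u D ∧
    ∀ z ∈ D, IsSpatialHessianAt u (Hu z) z ∧ IsTimeDerivAt u (ut z) z ∧
      pucciMinus lam Lam (Hu z) ≤ ut z ∧ ut z ≤ pucciPlus lam Lam (Hu z)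

/-- A Dini function: nondecreasing, nonnegative, with finite Dini integral. -/
def DiniFunction (ω : ℝ → ℝ) : Prop :=
  (∀ r, 0 ≤ ω r) ∧ MonotoneOn ω (Ici 0) ∧
    IntegrableOn (fun r => ω r / r) (Ioo (0 : ℝ) 1)

/-- The Dini integral `∫₀¹ ω(r)/r dr` plus `ω(1)`. -/
def diniNorm (ω : ℝ → ℝ) : ℝ := (∫ r in Ioo (0 : ℝ) 1, ω r / r) + ω 1

/-- The sup of `|u|` over `S` (the `L^∞` norm). -/
def supAbs {n : ℕ} (u : Pt n → ℝ) (S : Set (Pt n)) : ℝ := ⨆ z ∈ S, |u z|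

/-- The `L^p` norm of `f` over `S`. -/
def lpNorm {n : ℕ} (p : ℝ) (f : Pt n → ℝ) (S : Set (Pt n)) : ℝ :=
  (∫ z in S, |f z| ^ p) ^ p⁻¹

/-- The parabolic boundary of `Ω`. -/
def pBoundary {n : ℕ} (Ω : Set (Pt n)) : Set (Pt n) :=
  {z ∈ closure Ω | ∀ r > 0, ¬ pCyl z r ⊆ Ω}

/-- The bottom part of the parabolic boundary of `Ω`. -/
def pBotBoundary {n : ℕ} (Ω : Set (Pt n)) : Set (Pt n) :=
  {z ∈ pBoundary Ω | ∃ r > 0, pCyl z r ∩ Ω = ∅}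

/-- `f ∈ C^{-1,Dini}` at `z₀`, relative to `Ω`, with modulus `ω`. -/
def CMinusOneDiniAt {n : ℕ} (f : Pt n → ℝ) (Ω : Set (Pt n)) (ω : ℝ → ℝ) (z₀ : Pt n) :
    Prop :=
  ∀ r : ℝ, 0 < r → r < 1 →
    ((volume (Ω ∩ pCyl z₀ r)).toReal⁻¹ * ∫ z in Ω ∩ pCyl z₀ r, |f z| ^ ((n : ℝ) + 1))
        ^ (((n : ℝ) + 1)⁻¹) ≤ r⁻¹ * ω r

/-- The quantity `ρ = √(|x-x₀|² - ((x-x₀)·ν)² + |t-t₀|)`. -/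
def rho {n : ℕ} (z₀ : Pt n) (ν : EuclideanSpace ℝ (Fin n)) (z : Pt n) : ℝ :=
  Real.sqrt (‖z.1 - z₀.1‖ ^ 2 - dotp (z.1 - z₀.1) ν ^ 2 + |z.2 - z₀.2|)

/-- `Ω` satisfies the exterior `C^{1,Dini}` condition at `z₀` with modulus `ω`. -/
def ExtDiniAt {n : ℕ} (Ω : Set (Pt n)) (ω : ℝ → ℝ) (z₀ : Pt n) : Prop :=
  ∃ ν : EuclideanSpace ℝ (Fin n), ‖ν‖ = 1 ∧
    ∀ z ∈ pCyl z₀ 1, dotp (z.1 - z₀.1) ν < -(rho z₀ ν z * ω (rho z₀ ν z)) → z ∉ Ω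

/-- `g ∈ C^{1,Dini}` at `z₀` on `Γ`, with modulus `ω` and slope `l`. -/
def C1DiniAt {n : ℕ} (g : Pt n → ℝ) (Γ : Set (Pt n)) (ω : ℝ → ℝ) (z₀ : Pt n)
    (l : EuclideanSpace ℝ (Fin n)) : Prop :=
  ∀ z ∈ Γ ∩ pCyl z₀ 1,
    |g z - g z₀ - dotp l (z.1 - z₀.1)| ≤ pdist z z₀ * ω (pdist z z₀)

/-- `F` is uniformly elliptic with constants `λ, Λ`. -/
def UnifElliptic {n : ℕ} (lam Lam : ℝ) (F : Matrix (Fin n) (Fin n) ℝ → ℝ) : Prop :=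
  ∀ M N : Matrix (Fin n) (Fin n) ℝ, M.IsHermitian → N.IsHermitian →
    pucciMinus lam Lam M ≤ F (M + N) - F N ∧ F (M + N) - F N ≤ pucciPlus lam Lam M

/-- Frobenius norm of a matrix. -/
def frobNorm {n : ℕ} (M : Matrix (Fin n) (Fin n) ℝ) : ℝ :=
  Real.sqrt (∑ i, ∑ j, (M i j) ^ 2)

/-- The supergraph domain `{x_n > φ(x',t)}` of `φ` (dimension `n = m+1`). -/
def graphDomain (m : ℕ) (φ : (Fin m → ℝ) × ℝ → ℝ) : Set (Pt (m + 1)) :=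
  {z | φ (fun i => z.1 i.castSucc, z.2) < z.1 (Fin.last m)}

/-- The lateral graph boundary `{x_n = φ(x',t)}` of `φ`. -/
def graphBoundary (m : ℕ) (φ : (Fin m → ℝ) × ℝ → ℝ) : Set (Pt (m + 1)) :=
  {z | z.1 (Fin.last m) = φ (fun i => z.1 i.castSucc, z.2)}

/-- The upper-half parabolic cylinder `Q_r⁺(z₀)`. -/
def flatHalfCyl (m : ℕ) (z₀ : Pt (m + 1)) (r : ℝ) : Set (Pt (m + 1)) :=
  pCyl z₀ r ∩ {z | z₀.1 (Fin.last m) < z.1 (Fin.last m)}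

/-- The flat boundary piece `S_r(z₀)`. -/
def flatBase (m : ℕ) (z₀ : Pt (m + 1)) (r : ℝ) : Set (Pt (m + 1)) :=
  {z | z.1 (Fin.last m) = z₀.1 (Fin.last m) ∧ ‖z.1 - z₀.1‖ < r ∧
    z₀.2 - r ^ 2 < z.2 ∧ z.2 ≤ z₀.2}

/-- A parabolic cube with given center and half-side. -/
structure PCube (n : ℕ) where
  center : Pt n
  half : ℝ
  half_pos : 0 < half

/-- The underlying set `∏ᵢ [xᵢ-r, xᵢ+r] × [t-r², t+r²]` of a parabolic cube. -/
def PCube.toSet {n : ℕ} (Q : PCube n) : Set (Pt n) :=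
  {z | (∀ i, |z.1 i - Q.center.1 i| ≤ Q.half) ∧ |z.2 - Q.center.2| ≤ Q.half ^ 2}

/-- The `9/8`-dilate of a parabolic cube. -/
def PCube.dilate {n : ℕ} (Q : PCube n) : PCube n :=
  ⟨Q.center, (9 / 8) * Q.half, mul_pos (by norm_num) Q.half_pos⟩

/-- The parabolic diameter of a set. -/
def pdiam {n : ℕ} (A : Set (Pt n)) : ℝ := sSup (Set.image2 pdist A A)

/-- The parabolic distance between two sets. -/
def psetDist {n : ℕ} (A B : Set (Pt n)) : ℝ := sInf (Set.image2 pdist A B)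

/-- The parabolic distance from a point to a set. -/
def pdistToSet {n : ℕ} (z : Pt n) (A : Set (Pt n)) : ℝ := sInf ((pdist z) '' A)

end

/-! If `z ∈ Ω` is within parabolic distance `d` of `Γ`, its height `xₙ - φ(x', t)` above the graph
is at most `(1 + K₀) d`: going from a point `w ∈ Γ` to `z` changes `xₙ` by at most `d_p(z, w)` and
`φ` by at most `K₀ d_p(z, w)`. Hence the strip lies, over the base `B_r(x₀') × (t₀ - r², t₀]`, in
the layer `φ < xₙ ≤ φ + (1 + K₀) d`, and by Fubini its measure is at most
`(2r)^{n-1} · r² · (1 + K₀) d`. -/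

open Filter Topology

theorem volume_region_between_oc_eq_lintegral {α : Type*} [MeasurableSpace α] {μ : Measure α}
    {f g : α → ℝ} {s : Set α} (hf : Measurable f) (hg : Measurable g) (hs : MeasurableSet s) :
    μ.prod volume {p : α × ℝ | p.1 ∈ s ∧ p.2 ∈ Ioc (f p.1) (g p.1)} =
      ∫⁻ y in s, ENNReal.ofReal ((g - f) y) ∂μ := by
  rw [Measure.prod_apply (measurableSet_region_between_oc hf hg hs),
    ← lintegral_indicator hs]
  refine lintegral_congr fun x => ?_
  by_cases hx : x ∈ s
  · simp only [indicator_of_mem hx, preimage_ofPred_eq, hx, true_and, ofPred_mem_eq,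
      Real.volume_Ioc, Pi.sub_apply]
  · simp [hx]

/-- `(x, t) ↦ ((x', t), xₙ)`: in these coordinates a graph domain is a region between functions. -/
def splitLast (m : ℕ) : Pt (m + 1) ≃ᵐ ((Fin m → ℝ) × ℝ) × ℝ :=
  (((MeasurableEquiv.toLp 2 (Fin (m + 1) → ℝ)).symm.trans
      (MeasurableEquiv.piFinSuccAbove (fun _ => ℝ) (Fin.last m))).prodCongr
        (MeasurableEquiv.refl ℝ)).trans
    (MeasurableEquiv.prodAssoc.trans MeasurableEquiv.prodComm)

@[simp]
theorem splitLast_apply (m : ℕ) (z : Pt (m + 1)) :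
    splitLast m z = ((fun i => z.1 i.castSucc, z.2), z.1 (Fin.last m)) := by
  simp only [splitLast, MeasurableEquiv.trans_apply, MeasurableEquiv.piFinSuccAbove,
    Fin.insertNthEquiv, Equiv.symm_mk, Fin.removeNth_last]
  rfl

theorem measurePreserving_splitLast (m : ℕ) : MeasurePreserving (splitLast m) := by
  have hx := (EuclideanSpace.volume_preserving_symm_measurableEquiv_toLp (Fin (m + 1))).trans
    (volume_preserving_piFinSuccAbove (fun _ => ℝ) (Fin.last m))
  exact (Measure.measurePreserving_swap.comp volume_preserving_prodAssoc).comp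
    (hx.prod (MeasurePreserving.id volume))

theorem graphDomain_eq_preimage_splitLast (m : ℕ) (φ : (Fin m → ℝ) × ℝ → ℝ) :
    graphDomain m φ = splitLast m ⁻¹' {q | φ q.1 < q.2} := by
  ext z
  simp [graphDomain]

theorem graphBoundary_eq_preimage_splitLast (m : ℕ) (φ : (Fin m → ℝ) × ℝ → ℝ) :
    graphBoundary m φ = splitLast m ⁻¹' {q | q.2 = φ q.1} := by
  ext z
  simp [graphBoundary]

theorem graphBoundary_nonempty (m : ℕ) (φ : (Fin m → ℝ) × ℝ → ℝ) :
    (graphBoundary m φ).Nonempty := by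
  rw [graphBoundary_eq_preimage_splitLast]
  have hgraph : ({q | q.2 = φ q.1} : Set (((Fin m → ℝ) × ℝ) × ℝ)).Nonempty := ⟨(0, φ 0), rfl⟩
  exact hgraph.preimage (splitLast m).surjective

theorem pdist_eq_sqrt_splitLast {m : ℕ} (z w : Pt (m + 1)) :
    pdist z w = Real.sqrt ((∑ i, ((splitLast m z).1.1 i - (splitLast m w).1.1 i) ^ 2) +
      ((splitLast m z).2 - (splitLast m w).2) ^ 2 +
      |(splitLast m z).1.2 - (splitLast m w).1.2|) := by
  simp only [pdist, splitLast_apply, EuclideanSpace.norm_sq_eq, Fin.sum_univ_castSucc,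
    PiLp.sub_apply, Real.norm_eq_abs, sq_abs]

theorem abs_sub_last_le_pdist {m : ℕ} (z w : Pt (m + 1)) :
    |(splitLast m z).2 - (splitLast m w).2| ≤ pdist z w := by
  rw [pdist_eq_sqrt_splitLast, ← Real.sqrt_sq_eq_abs]
  refine Real.sqrt_le_sqrt ?_
  have := Finset.sum_nonneg fun i (_ : i ∈ Finset.univ) =>
    sq_nonneg ((splitLast m z).1.1 i - (splitLast m w).1.1 i)
  linarith [abs_nonneg ((splitLast m z).1.2 - (splitLast m w).1.2)]

theorem sqrt_sum_sub_init_le_pdist {m : ℕ} (z w : Pt (m + 1)) :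
    Real.sqrt ((∑ i, ((splitLast m z).1.1 i - (splitLast m w).1.1 i) ^ 2) +
      |(splitLast m z).1.2 - (splitLast m w).1.2|) ≤ pdist z w := by
  rw [pdist_eq_sqrt_splitLast]
  refine Real.sqrt_le_sqrt ?_
  linarith [sq_nonneg ((splitLast m z).2 - (splitLast m w).2)]

def ParabolicLipschitzWith (m : ℕ) (K : ℝ) (φ : (Fin m → ℝ) × ℝ → ℝ) : Prop :=
  ∀ a b : (Fin m → ℝ) × ℝ, |φ a - φ b| ≤ K * Real.sqrt ((∑ i, (a.1 i - b.1 i) ^ 2) + |a.2 - b.2|)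

namespace ParabolicLipschitzWith

variable {m : ℕ} {K : ℝ} {φ : (Fin m → ℝ) × ℝ → ℝ}

theorem continuous (hφ : ParabolicLipschitzWith m K φ) : Continuous φ := by
  refine continuous_iff_continuousAt.2 fun a => ?_
  have hmod : Tendsto (fun b : (Fin m → ℝ) × ℝ =>
      K * Real.sqrt ((∑ i, (b.1 i - a.1 i) ^ 2) + |b.2 - a.2|)) (𝓝 a) (𝓝 0) := by
    have : Continuous fun b : (Fin m → ℝ) × ℝ =>
        K * Real.sqrt ((∑ i, (b.1 i - a.1 i) ^ 2) + |b.2 - a.2|) := by fun_prop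
    simpa using this.tendsto a
  exact tendsto_iff_dist_tendsto_zero.2
    (squeeze_zero (fun _ => dist_nonneg) (fun b => (Real.dist_eq _ _).trans_le (hφ b a)) hmod)

theorem height_le_pdist (hφ : ParabolicLipschitzWith m K φ) (hK : 0 ≤ K) {z w : Pt (m + 1)}
    (hw : w ∈ graphBoundary m φ) :
    (splitLast m z).2 - φ (splitLast m z).1 ≤ (1 + K) * pdist z w := by
  rw [graphBoundary_eq_preimage_splitLast] at hw
  have hlast := (le_abs_self _).trans (abs_sub_last_le_pdist z w)
  have hφzw : φ (splitLast m w).1 - φ (splitLast m z).1 ≤ K * pdist z w :=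
    (le_abs_self _).trans <| (abs_sub_comm _ _).trans_le <| (hφ _ _).trans <|
      mul_le_mul_of_nonneg_left (sqrt_sum_sub_init_le_pdist z w) hK
  rw [show (splitLast m w).2 = _ from hw] at hlast
  linarith

theorem height_le_pdistToSet (hφ : ParabolicLipschitzWith m K φ) (hK : 0 ≤ K) (z : Pt (m + 1)) :
    (splitLast m z).2 - φ (splitLast m z).1 ≤ (1 + K) * pdistToSet z (graphBoundary m φ) := by
  rw [← div_le_iff₀' (by positivity)]
  refine le_csInf ((graphBoundary_nonempty m φ).image _) ?_
  rintro _ ⟨w, hw, rfl⟩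
  rw [div_le_iff₀' (by positivity)]
  exact hφ.height_le_pdist hK hw

end ParabolicLipschitzWith

theorem volume_preimage_splitLast_graphStrip {m : ℕ} {φ : (Fin m → ℝ) × ℝ → ℝ}
    (hφ : Measurable φ) {s : Set ((Fin m → ℝ) × ℝ)} (hs : MeasurableSet s) (L : ℝ) :
    volume (splitLast m ⁻¹' {q | q.1 ∈ s ∧ q.2 ∈ Ioc (φ q.1) (φ q.1 + L)}) =
      volume s * ENNReal.ofReal L := by
  rw [(measurePreserving_splitLast m).measure_preimage_equiv, Measure.volume_eq_prod,
    volume_region_between_oc_eq_lintegral hφ (hφ.add_const L) hs]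
  simp [mul_comm]

theorem splitLast_fst_mem_of_mem_pCyl {m : ℕ} {z₀ z : Pt (m + 1)} {r : ℝ} (hz : z ∈ pCyl z₀ r) :
    (splitLast m z).1 ∈ Metric.ball (splitLast m z₀).1.1 r ×ˢ Ioc (z₀.2 - r ^ 2) z₀.2 := by
  obtain ⟨hx, ht⟩ := hz
  refine ⟨?_, ht⟩
  rw [Metric.mem_ball, dist_pi_lt_iff ((norm_nonneg _).trans_lt hx)]
  intro i
  simpa [Real.dist_eq] using (PiLp.norm_apply_le (z.1 - z₀.1) i.castSucc).trans_lt hx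

/-- **Measure of a parabolic boundary strip in a Lipschitz graph domain** (Lemma 4.2):
in a parabolic Lipschitz graph domain, the part of `Ω ∩ Q_r(z₀)` within parabolic distance
`d` of the lateral boundary has measure at most `C·r^{n+1}·d`.  Here `n = m + 1 ≥ 1`. -/
theorem boundary_strip_measure (m : ℕ) (K₀ : ℝ) (hK₀ : 0 < K₀) :
    ∃ C : ℝ, 0 < C ∧
      ∀ (φ : (Fin m → ℝ) × ℝ → ℝ),
        (∀ a b : (Fin m → ℝ) × ℝ,
          |φ a - φ b| ≤ K₀ * Real.sqrt ((∑ i, (a.1 i - b.1 i) ^ 2) + |a.2 - b.2|)) →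
        ∀ z₀ ∈ closure (graphDomain m φ), ∀ r d : ℝ, 0 < r → 0 < d →
          volume {z ∈ graphDomain m φ ∩ pCyl z₀ r |
              pdistToSet z (graphBoundary m φ) ≤ d} ≤
            ENNReal.ofReal (C * r ^ (m + 2) * d) := by
  refine ⟨2 ^ m * (1 + K₀), by positivity,
    fun φ (hφ : ParabolicLipschitzWith m K₀ φ) z₀ _ r d hr _ => ?_⟩
  set B := Metric.ball (splitLast m z₀).1.1 r ×ˢ Ioc (z₀.2 - r ^ 2) z₀.2
  have hstrip : {z ∈ graphDomain m φ ∩ pCyl z₀ r | pdistToSet z (graphBoundary m φ) ≤ d} ⊆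
      splitLast m ⁻¹' {q | q.1 ∈ B ∧ q.2 ∈ Ioc (φ q.1) (φ q.1 + (1 + K₀) * d)} := by
    rintro z ⟨⟨hzΩ, hzQ⟩, hzd⟩
    rw [graphDomain_eq_preimage_splitLast] at hzΩ
    have hheight := (hφ.height_le_pdistToSet hK₀.le z).trans
      (mul_le_mul_of_nonneg_left hzd (by positivity))
    exact ⟨splitLast_fst_mem_of_mem_pCyl hzQ, hzΩ, by linarith⟩
  calc _ ≤ _ := measure_mono hstrip
    _ = volume B * ENNReal.ofReal ((1 + K₀) * d) :=
      volume_preimage_splitLast_graphStrip hφ.continuous.measurable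
        (Metric.isOpen_ball.measurableSet.prod measurableSet_Ioc) _
    _ = ENNReal.ofReal (2 ^ m * (1 + K₀) * r ^ (m + 2) * d) := by
      rw [Measure.volume_eq_prod, Measure.prod_prod, Real.volume_pi_ball _ hr, Real.volume_Ioc,
        sub_sub_cancel, ← ENNReal.ofReal_mul (by positivity), ← ENNReal.ofReal_mul (by positivity),
        Fintype.card_fin]
      ring_nf
end

section
/- Summability of the iteration scales (estimate (Ak) in the proof of Theorem 1.1): Let η, α ∈ (0,1) and let ω : [0,∞) → [0,∞) be nondecreasing with ω(1) ≤ η² and ∫₀¹ ω(r)/r dr ≤ η². Define A₀ := η² and, for k ≥ 0, A_{k+1} := max(ω(η^k), η^{α/2}·A_k). Then Σ_{k=0}^∞ A_k ≤ ((3−2η)/((1−η)·(1−η^{α/2})))·η². In particular, Σ_{k=0}^∞ A_k ≤ 4·η² whenever (3−2η)/((1−η)·(1−η^{α/2})) ≤ 4. -/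
open MeasureTheory Set

/-!
Since `ω` is nondecreasing, `ω(η^{j+1}) (1 - η) ≤ ∫_{η^{j+1}}^{η^j} ω(r)/r dr`; the intervals
`(η^{j+1}, η^j)` are disjoint in `(0, 1)`, so `Σ_k ω(η^k) ≤ ω(1) + η²/(1 - η) ≤ η² (2 - η)/(1 - η)`.
Bounding the maximum by the sum gives `A_{k+1} ≤ ω(η^k) + η^{α/2} A_k`, and summing this
recursion yields `(1 - η^{α/2}) Σ_k A_k ≤ A₀ + Σ_k ω(η^k) ≤ η² (3 - 2η)/(1 - η)`.
-/

open Finset in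
lemma sum_range_le_div_of_succ_le_add_mul {A w : ℕ → ℝ} {q W : ℝ} (hq0 : 0 ≤ q) (hq1 : q < 1)
    (hW : ∀ N, ∑ k ∈ range N, w k ≤ W) (h0 : 0 ≤ A 0 + W)
    (hA : ∀ k, A (k + 1) ≤ w k + q * A k) (N : ℕ) :
    ∑ k ∈ range N, A k ≤ (A 0 + W) / (1 - q) := by
  have h1q : 0 < 1 - q := sub_pos.2 hq1
  induction N with
  | zero => simpa using div_nonneg h0 h1q.le
  | succ N ih =>
    calc ∑ k ∈ range (N + 1), A k
        ≤ ∑ k ∈ range N, (w k + q * A k) + A 0 := by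
          rw [sum_range_succ']
          gcongr with k
          exact hA k
      _ = ∑ k ∈ range N, w k + q * ∑ k ∈ range N, A k + A 0 := by
          rw [sum_add_distrib, mul_sum]
      _ ≤ W + q * ((A 0 + W) / (1 - q)) + A 0 := by gcongr; exact hW N
      _ = (A 0 + W) / (1 - q) := by field_simp; ring

section MonotoneWeight

variable {ω : ℝ → ℝ} (hmono : MonotoneOn ω (Ici 0))
include hmono

lemma ofReal_mul_sub_le_setLIntegral_Ioo {a b : ℝ} (ha : 0 < a) (hab : a ≤ b) (hωa : 0 ≤ ω a) :
    ENNReal.ofReal (ω a / b * (b - a)) ≤ ∫⁻ r in Ioo a b, ENNReal.ofReal (ω r / r) := by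
  rw [ENNReal.ofReal_mul (div_nonneg hωa (ha.trans_le hab).le), ← Real.volume_Ioo,
    ← setLIntegral_const]
  refine setLIntegral_mono' measurableSet_Ioo fun r hr => ENNReal.ofReal_le_ofReal ?_
  have hωar : ω a ≤ ω r := hmono ha.le (ha.trans hr.1).le hr.1.le
  exact div_le_div₀ (hωa.trans hωar) hωar (ha.trans hr.1) hr.2.le

variable (hnn : ∀ r, 0 ≤ ω r) {η : ℝ} (hη0 : 0 < η) (hη1 : η < 1)
include hnn hη0 hη1

open Finset in
lemma ofReal_sum_pow_succ_le_lintegral (M : ℕ) :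
    ENNReal.ofReal ((1 - η) * ∑ j ∈ range M, ω (η ^ (j + 1))) ≤
      ∫⁻ r in Ioo 0 1, ENNReal.ofReal (ω r / r) := by
  have hdisj : Pairwise (Function.onFun Disjoint fun j : ℕ => Ioo (η ^ (j + 1)) (η ^ j)) :=
    (pow_right_anti₀ hη0.le hη1.le).pairwise_disjoint_on_Ioo_succ
  rw [mul_sum, ENNReal.ofReal_sum_of_nonneg fun j _ => mul_nonneg (by linarith) (hnn _)]
  calc ∑ j ∈ range M, ENNReal.ofReal ((1 - η) * ω (η ^ (j + 1)))
      ≤ ∑ j ∈ range M, ∫⁻ r in Ioo (η ^ (j + 1)) (η ^ j), ENNReal.ofReal (ω r / r) := by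
        refine sum_le_sum fun j _ => le_of_eq_of_le ?_ (ofReal_mul_sub_le_setLIntegral_Ioo hmono
          (pow_pos hη0 _) (pow_le_pow_of_le_one hη0.le hη1.le j.le_succ) (hnn _))
        congr 1
        field_simp
        ring
    _ = ∫⁻ r in ⋃ j ∈ Finset.range M, Ioo (η ^ (j + 1)) (η ^ j), ENNReal.ofReal (ω r / r) :=
        (lintegral_biUnion_finset (hdisj.set_pairwise _) (fun _ _ => measurableSet_Ioo) _).symm
    _ ≤ ∫⁻ r in Ioo 0 1, ENNReal.ofReal (ω r / r) :=
        lintegral_mono_set <| iUnion₂_subset fun j _ =>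
          Ioo_subset_Ioo (pow_pos hη0 _).le (pow_le_one₀ hη0.le hη1.le)

open Finset in
lemma sum_range_pow_le_of_lintegral_le {I : ℝ} (hI : 0 ≤ I)
    (hint : ∫⁻ r in Ioo 0 1, ENNReal.ofReal (ω r / r) ≤ ENNReal.ofReal I) (N : ℕ) :
    ∑ k ∈ range N, ω (η ^ k) ≤ ω 1 + I / (1 - η) := by
  have h1η : 0 < 1 - η := sub_pos.2 hη1
  cases N with
  | zero => simpa using add_nonneg (hnn 1) (div_nonneg hI h1η.le)
  | succ M =>
    have hM := (ENNReal.ofReal_le_ofReal_iff hI).1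
      ((ofReal_sum_pow_succ_le_lintegral hmono hnn hη0 hη1 M).trans hint)
    rw [sum_range_succ', pow_zero, add_comm]
    linarith [(le_div_iff₀' h1η).2 hM]

end MonotoneWeight

theorem iteration_scales_sum_general
    (η α : ℝ) (hη0 : 0 < η) (hη1 : η < 1) (hα0 : 0 < α)
    (ω : ℝ → ℝ) (hnn : ∀ r, 0 ≤ ω r) (hmono : MonotoneOn ω (Ici 0))
    (hω1 : ω 1 ≤ η ^ 2)
    (hint : (∫⁻ r in Ioo (0 : ℝ) 1, ENNReal.ofReal (ω r / r)) ≤ ENNReal.ofReal (η ^ 2))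
    (A : ℕ → ℝ) (hA0 : A 0 = η ^ 2)
    (hAk : ∀ k : ℕ, A (k + 1) = max (ω (η ^ k)) (η ^ (α / 2) * A k)) :
    (∀ N : ℕ, ∑ k ∈ Finset.range N, A k ≤
        (3 - 2 * η) / ((1 - η) * (1 - η ^ (α / 2))) * η ^ 2) ∧
      ((3 - 2 * η) / ((1 - η) * (1 - η ^ (α / 2))) ≤ 4 →
        ∀ N : ℕ, ∑ k ∈ Finset.range N, A k ≤ 4 * η ^ 2) := by
  set q := η ^ (α / 2)
  have hq0 : 0 ≤ q := by positivity
  have hq1 : q < 1 := Real.rpow_lt_one hη0.le hη1 (by positivity)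
  have h1η : 0 < 1 - η := sub_pos.2 hη1
  have hA_nonneg : ∀ k, 0 ≤ A k
    | 0 => hA0 ▸ sq_nonneg η
    | k + 1 => (hAk k).symm ▸ le_max_of_le_left (hnn _)
  have hsum := sum_range_le_div_of_succ_le_add_mul hq0 hq1
    (sum_range_pow_le_of_lintegral_le hmono hnn hη0 hη1 (sq_nonneg η) hint)
    (by rw [hA0]; exact add_nonneg (sq_nonneg η) (add_nonneg (hnn 1) (by positivity)))
    fun k => (hAk k).trans_le (max_le_add_of_nonneg (hnn _) (mul_nonneg hq0 (hA_nonneg k)))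
  have hbound : (A 0 + (ω 1 + η ^ 2 / (1 - η))) / (1 - q) ≤
      (3 - 2 * η) / ((1 - η) * (1 - q)) * η ^ 2 := by
    calc (A 0 + (ω 1 + η ^ 2 / (1 - η))) / (1 - q)
        ≤ (η ^ 2 + (η ^ 2 + η ^ 2 / (1 - η))) / (1 - q) := by
          rw [hA0]; gcongr
      _ = (3 - 2 * η) / ((1 - η) * (1 - q)) * η ^ 2 := by field_simp; ring
  exact ⟨fun N => (hsum N).trans hbound,
    fun h4 N => (hsum N).trans (hbound.trans (mul_le_mul_of_nonneg_right h4 (sq_nonneg η)))⟩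

/-- **Summability of the iteration scales** (estimate (Ak) in the proof of Theorem 1.1):
if `ω` is nondecreasing and nonnegative with `ω(1) ≤ η²` and `∫₀¹ ω(r)/r dr ≤ η²`, and
`A₀ = η²`, `A_{k+1} = max(ω(η^k), η^{α/2}·A_k)`, then
`Σ_{k=0}^∞ A_k ≤ ((3-2η)/((1-η)(1-η^{α/2})))·η²`; in particular `Σ_{k=0}^∞ A_k ≤ 4η²`
whenever `(3-2η)/((1-η)(1-η^{α/2})) ≤ 4`.  (The sum of the nonnegative terms `A_k` is
expressed through its partial sums.) -/
theorem iteration_scales_sum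
    (η α : ℝ) (hη0 : 0 < η) (hη1 : η < 1) (hα0 : 0 < α) (hα1 : α < 1)
    (ω : ℝ → ℝ) (hnn : ∀ r, 0 ≤ ω r) (hmono : MonotoneOn ω (Ici 0))
    (hω1 : ω 1 ≤ η ^ 2)
    (hint : (∫⁻ r in Ioo (0 : ℝ) 1, ENNReal.ofReal (ω r / r)) ≤ ENNReal.ofReal (η ^ 2))
    (A : ℕ → ℝ) (hA0 : A 0 = η ^ 2)
    (hAk : ∀ k : ℕ, A (k + 1) = max (ω (η ^ k)) (η ^ (α / 2) * A k)) :
    (∀ N : ℕ, ∑ k ∈ Finset.range N, A k ≤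
        (3 - 2 * η) / ((1 - η) * (1 - η ^ (α / 2))) * η ^ 2) ∧
      ((3 - 2 * η) / ((1 - η) * (1 - η ^ (α / 2))) ≤ 4 →
        ∀ N : ℕ, ∑ k ∈ Finset.range N, A k ≤ 4 * η ^ 2) :=
  iteration_scales_sum_general η α hη0 hη1 hα0 ω hnn hmono hω1 hint A hA0 hAk
end
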